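/- arXiv:2403.01906 — 3 statements merged into one kernel-verified Lean document; each statement's English description precedes it below -/
import Mathlib

section
/- Let I : [0,∞) → ℝ³ be continuous with I₀(t) = 0 for all t ≥ 0. If v is a solution of (EqP) with v₀(0) = 0, then v₀(t) = 0 for all t ≥ 0 (so the output y(t) = v₀(t) is identically null). -/
open MeasureTheory Real Set Filter

/-- The neuronal activity profile `V(r,θ,v) = v₀ + r v₁ cos(2θ) + r v₂ sin(2θ)`. -/
noncomputable def Vact (v : Fin 3 → ℝ) (r θ : ℝ) : ℝ :=
  v 0 + r * v 1 * Real.cos (2 * θ) + r * v 2 * Real.sin (2 * θ)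

/-- The right-hand side `f(v, I(t))` of the reduced neural field equation (EqP). -/
noncomputable def fvec (σ P : ℝ → ℝ) (J0 J1 : ℝ) (It : ℝ × ℝ × ℝ) (v : Fin 3 → ℝ) :
    Fin 3 → ℝ :=
  ![ -v 0 + J0 * (∫ x in (Set.Ici (0:ℝ)) ×ˢ (Set.Ico (-(π/2)) (π/2)),
        σ (Vact v x.1 x.2) * P x.1 / π) + It.1,
     -v 1 + J1 * (∫ x in (Set.Ici (0:ℝ)) ×ˢ (Set.Ico (-(π/2)) (π/2)),
        x.1 * Real.cos (2 * x.2) * σ (Vact v x.1 x.2) * P x.1 / π) + It.2.1,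
     -v 2 + J1 * (∫ x in (Set.Ici (0:ℝ)) ×ˢ (Set.Ico (-(π/2)) (π/2)),
        x.1 * Real.sin (2 * x.2) * σ (Vact v x.1 x.2) * P x.1 / π) + It.2.2 ]

/-- A solution of (EqP) on `[0,∞)`: a `C¹` curve satisfying `v̇(t) = f(v(t), I(t))`. -/
def IsSol (σ P : ℝ → ℝ) (J0 J1 : ℝ) (I : ℝ → ℝ × ℝ × ℝ) (v : ℝ → Fin 3 → ℝ) : Prop :=
  ContDiffOn ℝ 1 v (Set.Ici (0:ℝ)) ∧
  ∀ t ∈ Set.Ici (0:ℝ),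
    HasDerivWithinAt v (fvec σ P J0 J1 (I t) (v t)) (Set.Ici (0:ℝ)) t

open scoped NNReal

/-!
The integral term `m(v)` of `f₀` is odd in `v₀`: shifting `θ` by `π / 2` turns
`V(r, θ, (v₀, v₁, v₂))` into `V(r, θ, (v₀, -v₁, -v₂))`, and `σ` is odd. Hence
`2 m(v) = m(v) - m(-v₀, v₁, v₂)`, and since `σ` is `σ'(0)`-Lipschitz, `|m(v)| ≤ σ'(0) |v₀|`.
With `I₀ = 0` this gives `|v̇₀| ≤ (1 + |J₀| σ'(0)) |v₀|`, so Grönwall's inequality and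
`v₀(0) = 0` force `v₀ ≡ 0`.
-/

lemma Function.Periodic.intervalIntegral_comp_add_right {E : Type*} [NormedAddCommGroup E]
    [NormedSpace ℝ E] {f : ℝ → E} {T : ℝ} (hf : Function.Periodic f T) (t s : ℝ) :
    ∫ x in t..t + T, f (x + s) = ∫ x in t..t + T, f x := by
  rw [intervalIntegral.integral_comp_add_right, add_right_comm]
  exact hf.intervalIntegral_add_eq _ _

lemma setIntegral_Ico_comp_sub_cos_sub_sin {E : Type*} [NormedAddCommGroup E] [NormedSpace ℝ E]
    (f : ℝ → E) (a b c : ℝ) :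
    ∫ θ in Ico (-(π / 2)) (π / 2), f (a - b * cos (2 * θ) - c * sin (2 * θ)) =
      ∫ θ in Ico (-(π / 2)) (π / 2), f (a + b * cos (2 * θ) + c * sin (2 * θ)) := by
  set g : ℝ → E := fun θ ↦ f (a + b * cos (2 * θ) + c * sin (2 * θ))
  have hg : Function.Periodic g π := fun θ ↦ by
    simp only [g, mul_add, cos_add_two_pi, sin_add_two_pi]
  have hshift : ∀ θ, f (a - b * cos (2 * θ) - c * sin (2 * θ)) = g (θ + π / 2) := fun θ ↦ by
    simp only [g, mul_add, mul_div_cancel₀ π two_ne_zero, cos_add_pi, sin_add_pi]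
    ring_nf
  have key := hg.intervalIntegral_comp_add_right (-(π / 2)) (π / 2)
  rw [show -(π / 2) + π = π / 2 by ring,
    intervalIntegral.integral_of_le (neg_le_self (div_nonneg pi_pos.le zero_le_two)),
    intervalIntegral.integral_of_le (neg_le_self (div_nonneg pi_pos.le zero_le_two))] at key
  simpa only [hshift, integral_Ico_eq_integral_Ioc] using key

lemma integrableOn_prod_mul_fst_of_abs_le {φ : ℝ × ℝ → ℝ} {P : ℝ → ℝ} {C a b : ℝ} {s : Set ℝ}
    (hφ : Continuous φ) (hφC : ∀ z, |φ z| ≤ C) (hP : IntegrableOn P s) :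
    IntegrableOn (fun z ↦ φ z * P z.1) (s ×ˢ Ico a b) := by
  rw [IntegrableOn, Measure.volume_eq_prod, ← Measure.prod_restrict]
  exact (hP.comp_fst _).bdd_mul hφ.aestronglyMeasurable (.of_forall hφC)

noncomputable def meanActivity (σ P : ℝ → ℝ) (w : Fin 3 → ℝ) : ℝ :=
  ∫ z in Ici (0 : ℝ) ×ˢ Ico (-(π / 2)) (π / 2), σ (Vact w z.1 z.2) * P z.1 / π

lemma fvec_zero (σ P : ℝ → ℝ) (J0 J1 : ℝ) (It : ℝ × ℝ × ℝ) (w : Fin 3 → ℝ) :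
    fvec σ P J0 J1 It w 0 = -w 0 + J0 * meanActivity σ P w + It.1 :=
  rfl

section meanActivity

variable {σ P : ℝ → ℝ}

lemma meanActivity_neg (hodd : ∀ x, σ (-x) = -σ x) (w : Fin 3 → ℝ) :
    meanActivity σ P (-w) = -meanActivity σ P w := by
  rw [meanActivity, meanActivity, ← integral_neg]
  congr 1 with z
  rw [show Vact (-w) z.1 z.2 = -Vact w z.1 z.2 by simp only [Vact, Pi.neg_apply]; ring, hodd]
  ring

lemma integrableOn_meanActivity_integrand {C : ℝ} (hσ : Continuous σ) (hσC : ∀ x, |σ x| ≤ C)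
    (hP : IntegrableOn P (Ici 0)) (w : Fin 3 → ℝ) :
    IntegrableOn (fun z : ℝ × ℝ ↦ σ (Vact w z.1 z.2) * P z.1 / π)
      (Ici 0 ×ˢ Ico (-(π / 2)) (π / 2)) :=
  (integrableOn_prod_mul_fst_of_abs_le (hσ.comp (by unfold Vact; fun_prop))
    (fun z ↦ hσC _) hP).div_const π

lemma meanActivity_neg_coords_one_two {C : ℝ} (hσ : Continuous σ) (hσC : ∀ x, |σ x| ≤ C)
    (hP : IntegrableOn P (Ici 0)) (w : Fin 3 → ℝ) :
    meanActivity σ P ![w 0, -w 1, -w 2] = meanActivity σ P w := by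
  have hint := integrableOn_meanActivity_integrand hσ hσC hP
  rw [meanActivity, meanActivity, Measure.volume_eq_prod, setIntegral_prod _ (hint _),
    setIntegral_prod _ (hint w)]
  refine setIntegral_congr_fun measurableSet_Ici fun r _ ↦ ?_
  have hV : ∀ θ, Vact ![w 0, -w 1, -w 2] r θ =
      w 0 - r * w 1 * cos (2 * θ) - r * w 2 * sin (2 * θ) := fun θ ↦ by
    simp only [Vact, Matrix.cons_val]; ring
  simp only [hV]
  exact setIntegral_Ico_comp_sub_cos_sub_sin (fun x ↦ σ x * P r / π) _ _ _

lemma meanActivity_neg_coord_zero {C : ℝ} (hσ : Continuous σ) (hσC : ∀ x, |σ x| ≤ C)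
    (hodd : ∀ x, σ (-x) = -σ x) (hP : IntegrableOn P (Ici 0)) (w : Fin 3 → ℝ) :
    meanActivity σ P ![-w 0, w 1, w 2] = -meanActivity σ P w := by
  rw [← meanActivity_neg_coords_one_two hσ hσC hP w, ← meanActivity_neg hodd]
  congr 1
  ext i; fin_cases i <;> simp

lemma abs_meanActivity_le {K : ℝ≥0} {C : ℝ} (hlip : LipschitzWith K σ)
    (hσC : ∀ x, |σ x| ≤ C) (hodd : ∀ x, σ (-x) = -σ x) (hP0 : ∀ r, 0 ≤ P r)
    (hPint : ∫ r in Ici (0 : ℝ), P r = 1) (w : Fin 3 → ℝ) :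
    |meanActivity σ P w| ≤ K * |w 0| := by
  have hP : IntegrableOn P (Ici 0) := .of_integral_ne_zero (by simp [hPint])
  have hint := integrableOn_meanActivity_integrand hlip.continuous hσC hP
  set w' : Fin 3 → ℝ := ![-w 0, w 1, w 2]
  set c : ℝ := 2 * K * |w 0| / π with hc_def
  have htwice : 2 * meanActivity σ P w = ∫ z in Ici 0 ×ˢ Ico (-(π / 2)) (π / 2),
      (σ (Vact w z.1 z.2) * P z.1 / π - σ (Vact w' z.1 z.2) * P z.1 / π) := by
    rw [integral_sub (hint w) (hint w'), ← meanActivity, ← meanActivity,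
      meanActivity_neg_coord_zero hlip.continuous hσC hodd hP]
    ring
  have hbound : ∀ z : ℝ × ℝ,
      ‖σ (Vact w z.1 z.2) * P z.1 / π - σ (Vact w' z.1 z.2) * P z.1 / π‖ ≤ P z.1 * c := by
    intro z
    have hlip_z := hlip.dist_le_mul (Vact w z.1 z.2) (Vact w' z.1 z.2)
    rw [Real.dist_eq, Real.dist_eq,
      show Vact w z.1 z.2 - Vact w' z.1 z.2 = 2 * w 0 by simp [w', Vact]; ring, abs_mul,
      abs_two] at hlip_z
    rw [Real.norm_eq_abs, ← sub_div, ← sub_mul, abs_div, abs_mul, abs_of_nonneg (hP0 _),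
      abs_of_pos pi_pos, div_le_iff₀ pi_pos]
    calc |σ (Vact w z.1 z.2) - σ (Vact w' z.1 z.2)| * P z.1
        ≤ K * (2 * |w 0|) * P z.1 := mul_le_mul_of_nonneg_right hlip_z (hP0 _)
      _ = P z.1 * c * π := by rw [hc_def]; field_simp
  have htotal : ∫ z in Ici 0 ×ˢ Ico (-(π / 2)) (π / 2), P z.1 * c = 2 * (K * |w 0|) := by
    rw [Measure.volume_eq_prod, setIntegral_prod_mul P (fun _ ↦ c), hPint, setIntegral_const,
      measureReal_def, Real.volume_Ico, show π / 2 - -(π / 2) = π by ring,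
      ENNReal.toReal_ofReal pi_pos.le, smul_eq_mul]
    rw [hc_def]; field_simp
  have hc : IntegrableOn (fun z : ℝ × ℝ ↦ P z.1 * c) (Ici 0 ×ˢ Ico (-(π / 2)) (π / 2)) := by
    simpa only [mul_comm] using
      integrableOn_prod_mul_fst_of_abs_le (φ := fun _ ↦ c) continuous_const (fun _ ↦ le_rfl) hP
  have := (norm_integral_le_of_norm_le hc (.of_forall hbound)).trans_eq htotal
  rw [← htwice, Real.norm_eq_abs, abs_mul, abs_two] at this
  linarith

end meanActivity

lemma lipschitzWith_of_deriv_nonneg_of_le {f : ℝ → ℝ} {L : ℝ} (hf : Differentiable ℝ f)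
    (h0 : ∀ x, 0 ≤ deriv f x) (hL : ∀ x, deriv f x ≤ L) : LipschitzWith L.toNNReal f :=
  lipschitzWith_of_nnnorm_deriv_le hf fun x ↦ by
    rw [← NNReal.coe_le_coe, coe_nnnorm, Real.norm_of_nonneg (h0 x), Real.coe_toNNReal']
    exact le_max_of_le_left (hL x)

theorem output_null_on_Z0_general
    (σ P : ℝ → ℝ) (J0 J1 : ℝ)
    (I : ℝ → ℝ × ℝ × ℝ) (hI0 : ∀ t : ℝ, 0 ≤ t → (I t).1 = 0)
    (hσ : ContDiff ℝ (⊤ : ℕ∞) σ)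
    (hodd : ∀ x, σ (-x) = -σ x)
    (hpos : ∀ x, 0 < deriv σ x)
    (hbot : Tendsto σ atBot (nhds (-1)))
    (htop : Tendsto σ atTop (nhds 1))
    (hmax : ∀ x, deriv σ x ≤ deriv σ 0)
    (hP0 : ∀ r, 0 ≤ P r)
    (hPint : ∫ r in Set.Ici (0:ℝ), P r = 1)
    (v : ℝ → Fin 3 → ℝ) (hv : IsSol σ P J0 J1 I v) (hinit : v 0 0 = 0) :
    ∀ t : ℝ, 0 ≤ t → v t 0 = 0 := by
  have hlip := lipschitzWith_of_deriv_nonneg_of_le (hσ.differentiable (by simp))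
    (fun x ↦ (hpos x).le) hmax
  have hmono : Monotone σ := (strictMono_of_deriv_pos hpos).monotone
  have hσ1 : ∀ x, |σ x| ≤ 1 := fun x ↦
    abs_le.2 ⟨hmono.le_of_tendsto hbot x, hmono.ge_of_tendsto htop x⟩
  intro t ht
  refine eq_zero_of_abs_deriv_le_mul_abs_self_of_eq_zero_right (f := fun s ↦ v s 0)
    (f' := fun s ↦ fvec σ P J0 J1 (I s) (v s) 0)
    (K := 1 + |J0| * (deriv σ 0).toNNReal) ?_ (fun s hs ↦ ?_) hinit (fun s hs ↦ ?_) t ⟨ht, le_rfl⟩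
  · exact ((continuous_apply 0).comp_continuousOn hv.1.continuousOn).mono Icc_subset_Ici_self
  · exact (hasDerivWithinAt_pi.1 (hv.2 s hs.1) 0).mono (Ici_subset_Ici.2 hs.1)
  · rw [fvec_zero, hI0 s hs.1, add_zero, Real.norm_eq_abs, Real.norm_eq_abs]
    calc |-v s 0 + J0 * meanActivity σ P (v s)|
        ≤ |v s 0| + |J0| * |meanActivity σ P (v s)| := by
          simpa only [abs_neg, abs_mul] using abs_add_le (-v s 0) (J0 * meanActivity σ P (v s))
      _ ≤ |v s 0| + |J0| * ((deriv σ 0).toNNReal * |v s 0|) := by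
          gcongr
          exact abs_meanActivity_le hlip hσ1 hodd hP0 hPint _
      _ = (1 + |J0| * (deriv σ 0).toNNReal) * |v s 0| := by ring

/-- if `I₀ ≡ 0` and `v` is a solution of (EqP) with `v₀(0) = 0`, then
the output `y(t) = v₀(t)` is identically zero on `[0,∞)`. -/
theorem output_null_on_Z0
    (σ P : ℝ → ℝ) (J0 J1 : ℝ) (hJ0 : J0 ≠ 0) (hJ1 : 0 < J1)
    (I : ℝ → ℝ × ℝ × ℝ) (hI : Continuous I) (hI0 : ∀ t : ℝ, 0 ≤ t → (I t).1 = 0)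
    (hσ : ContDiff ℝ (⊤ : ℕ∞) σ)
    (hodd : ∀ x, σ (-x) = -σ x)
    (hpos : ∀ x, 0 < deriv σ x)
    (hcc : ∀ x, x * iteratedDeriv 2 σ x ≤ 0)
    (hσ0 : σ 0 = 0)
    (hbot : Tendsto σ atBot (nhds (-1)))
    (htop : Tendsto σ atTop (nhds 1))
    (hmax : ∀ x, deriv σ x ≤ deriv σ 0)
    (hP0 : ∀ r, 0 ≤ P r)
    (hPsupp : HasCompactSupport P)
    (hPint : ∫ r in Set.Ici (0:ℝ), P r = 1)
    (v : ℝ → Fin 3 → ℝ) (hv : IsSol σ P J0 J1 I v) (hinit : v 0 0 = 0) :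
    ∀ t : ℝ, 0 ≤ t → v t 0 = 0 :=
  output_null_on_Z0_general σ P J0 J1 I hI0 hσ hodd hpos hbot htop hmax hP0 hPint v hv hinit
end

section
/- Let I : [0,∞) → ℝ³ be continuous with I₀(t) ≥ c > 0 for all t ≥ 0, and let v be a solution of (EqP). Then for all t ≥ 0, v̇₀(t) ≥ −(1 + |J₀| σ'(0)) |v₀(t)| + c. In particular, setting δ* = c / (1 + |J₀| σ'(0)), one has v̇₀(t) > 0 at every time t with |v₀(t)| < δ*. -/
/-!
Write `V = v₀ + w` with `w(r, θ) = r v₁ cos 2θ + r v₂ sin 2θ`. Shifting `θ` by `π/2` flips the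
sign of `w`, so, `σ` being odd, `σ ∘ w` integrates to zero against `P/π` over `Ω`. Hence
`∫_Ω σ(V) P/π = ∫_Ω (σ(V) − σ(w)) P/π`, and since `σ` is `σ'(0)`-Lipschitz and `P/π` has mass one
on `Ω`, this integral is at most `σ'(0) |v₀|` in absolute value. Inserting this into
`v̇₀ = −v₀ + J₀ ∫_Ω σ(V) P/π + I₀` with `I₀ ≥ c` gives the bound.
-/

open MeasureTheory Real Set Filter

local notation "Ω" => SProd.sprod (Ici (0:ℝ)) (Ico (-(π/2)) (π/2))

theorem Function.Antiperiodic.intervalIntegral_eq_zero {E : Type*} [NormedAddCommGroup E]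
    [NormedSpace ℝ E] {f : ℝ → E} {c : ℝ} (hf : Function.Antiperiodic f c) {a : ℝ}
    (hint : IntervalIntegrable f volume a (a + c)) :
    ∫ x in a..a + 2 * c, f x = 0 := by
  have htwo : a + 2 * c = a + c + c := by ring
  have hint_shift : IntervalIntegrable f volume (a + c) (a + 2 * c) := by
    rw [htwo]
    convert (hint.comp_sub_right c).neg using 1
    ext x
    simpa using hf (x - c)
  rw [← intervalIntegral.integral_add_adjacent_intervals hint hint_shift, htwo,
    ← intervalIntegral.integral_comp_add_right]
  simp only [hf _, intervalIntegral.integral_neg, add_neg_cancel]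

theorem setIntegral_prod_Ico_eq_zero_of_antiperiodic {α E : Type*} [MeasurableSpace α]
    [NormedAddCommGroup E] [NormedSpace ℝ E] {μ : Measure α} [SFinite μ] {F : α × ℝ → E}
    {s : Set α} {a c : ℝ} (hc : 0 < c) (hF : ∀ x, Function.Antiperiodic (fun y => F (x, y)) c)
    (hint : IntegrableOn F (s ×ˢ Ico a (a + 2 * c)) (μ.prod volume)) :
    ∫ z in s ×ˢ Ico a (a + 2 * c), F z ∂μ.prod volume = 0 := by
  have hsection : ∀ᵐ x ∂μ.restrict s, IntegrableOn (fun y => F (x, y)) (Ico a (a + 2 * c)) := by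
    rw [IntegrableOn, ← Measure.prod_restrict] at hint
    exact hint.prod_right_ae
  rw [setIntegral_prod _ hint]
  refine integral_eq_zero_of_ae (hsection.mono fun x hx => ?_)
  have hsub : Ioc a (a + c) ⊆ Ico a (a + 2 * c) := fun y hy => ⟨hy.1.le, by linarith [hy.2]⟩
  change ∫ y in Ico a (a + 2 * c), F (x, y) = 0
  rw [integral_Ico_eq_integral_Ioo, ← integral_Ioc_eq_integral_Ioo,
    ← intervalIntegral.integral_of_le (by linarith)]
  exact (hF x).intervalIntegral_eq_zero
    ((intervalIntegrable_iff_integrableOn_Ioc_of_le (by linarith)).2 (hx.mono_set hsub))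

theorem integrableOn_prod_mul_fst_of_bdd {α β : Type*} [MeasurableSpace α] [MeasurableSpace β]
    {μ : Measure α} {ν : Measure β} [SFinite μ] [SFinite ν] {s : Set α} {t : Set β}
    {P : α → ℝ} {F : α × β → ℝ} {M : ℝ} (hP : IntegrableOn P s μ) (ht : ν t ≠ ⊤)
    (hF : AEStronglyMeasurable F (μ.prod ν)) (hM : ∀ z, ‖F z‖ ≤ M) :
    IntegrableOn (fun z => F z * P z.1) (s ×ˢ t) (μ.prod ν) := by
  have hPt : IntegrableOn (fun z => P z.1) (s ×ˢ t) (μ.prod ν) := by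
    rw [IntegrableOn, ← Measure.prod_restrict]
    simpa only [mul_one] using hP.mul_prod (integrableOn_const (C := (1 : ℝ)) ht)
  exact hPt.bdd_mul hF.restrict (ae_of_all _ hM)

theorem setIntegral_prod_fst {α β : Type*} [MeasurableSpace α] [MeasurableSpace β]
    {μ : Measure α} {ν : Measure β} [SFinite μ] [SFinite ν] (P : α → ℝ) (s : Set α)
    (t : Set β) : ∫ z in s ×ˢ t, P z.1 ∂μ.prod ν = ν.real t * ∫ x in s, P x ∂μ := by
  rw [← Measure.prod_restrict, integral_fun_fst, measureReal_restrict_apply_univ, smul_eq_mul]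

theorem abs_integral_mul_le_of_abs_sub_le {α : Type*} [MeasurableSpace α] {μ : Measure α}
    {f g ρ : α → ℝ} {C : ℝ} (hρ0 : ∀ x, 0 ≤ ρ x) (hρ : ∫ x, ρ x ∂μ = 1)
    (hf : Integrable (fun x => f x * ρ x) μ) (hg : Integrable (fun x => g x * ρ x) μ)
    (hg0 : ∫ x, g x * ρ x ∂μ = 0) (hfg : ∀ x, |f x - g x| ≤ C) :
    |∫ x, f x * ρ x ∂μ| ≤ C := by
  have hsub : ∫ x, f x * ρ x ∂μ = ∫ x, (f x - g x) * ρ x ∂μ := by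
    simp only [sub_mul, integral_sub hf hg, hg0, sub_zero]
  calc |∫ x, f x * ρ x ∂μ| ≤ ∫ x, C * ρ x ∂μ := by
        rw [hsub, ← Real.norm_eq_abs]
        refine norm_integral_le_of_norm_le ((integrable_of_integral_eq_one hρ).const_mul C)
          (ae_of_all _ fun x => ?_)
        rw [norm_mul, Real.norm_eq_abs, Real.norm_of_nonneg (hρ0 x)]
        exact mul_le_mul_of_nonneg_right (hfg x) (hρ0 x)
    _ = C := by rw [integral_const_mul, hρ, mul_one]

theorem abs_sub_le_deriv_zero_mul {σ : ℝ → ℝ} (hpos : ∀ x, 0 < deriv σ x)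
    (hmax : ∀ x, deriv σ x ≤ deriv σ 0) (a b : ℝ) : |σ a - σ b| ≤ deriv σ 0 * |a - b| := by
  have hdiff : ∀ x ∈ univ, DifferentiableAt ℝ σ x :=
    fun x _ => differentiableAt_of_deriv_ne_zero (hpos x).ne'
  have hbound : ∀ x ∈ univ, ‖deriv σ x‖ ≤ deriv σ 0 := fun x _ => by
    rw [Real.norm_of_nonneg (hpos x).le]
    exact hmax x
  simpa only [Real.norm_eq_abs] using
    convex_univ.norm_image_sub_le_of_norm_deriv_le hdiff hbound (mem_univ b) (mem_univ a)

theorem abs_integral_sigma_Vact_le {σ P : ℝ → ℝ} (hodd : ∀ x, σ (-x) = -σ x)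
    (hpos : ∀ x, 0 < deriv σ x) (hmax : ∀ x, deriv σ x ≤ deriv σ 0)
    (hbot : Tendsto σ atBot (nhds (-1))) (htop : Tendsto σ atTop (nhds 1))
    (hP0 : ∀ r, 0 ≤ P r) (hPint : ∫ r in Ici (0:ℝ), P r = 1) (v : Fin 3 → ℝ) :
    |∫ x in Ω, σ (Vact v x.1 x.2) * P x.1 / π| ≤ deriv σ 0 * |v 0| := by
  set w : ℝ × ℝ → ℝ := fun z => z.1 * v 1 * cos (2 * z.2) + z.1 * v 2 * sin (2 * z.2) with hw
  have hcont : Continuous σ := continuous_iff_continuousAt.2 fun x =>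
    (differentiableAt_of_deriv_ne_zero (hpos x).ne').continuousAt
  have hmono : Monotone σ := (strictMono_of_deriv_pos hpos).monotone
  have hbdd : ∀ y, ‖σ y‖ ≤ 1 := fun y =>
    abs_le.2 ⟨hmono.le_of_tendsto hbot y, hmono.ge_of_tendsto htop y⟩
  have hint : ∀ u : ℝ × ℝ → ℝ, Continuous u →
      IntegrableOn (fun z => σ (u z) * (P z.1 / π)) Ω := fun u hu => by
    have : IntegrableOn (fun z => σ (u z) * P z.1 / π) Ω :=
      (integrableOn_prod_mul_fst_of_bdd (integrable_of_integral_eq_one hPint)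
        measure_Ico_lt_top.ne (hcont.comp hu).aestronglyMeasurable fun z => hbdd (u z)).div_const π
    simpa only [mul_div_assoc] using this
  have hmass : ∫ z in Ω, P z.1 / π = 1 := by
    rw [integral_div, Measure.volume_eq_prod, setIntegral_prod_fst, hPint, Real.volume_real_Ico,
      show π / 2 - -(π / 2) = π by ring, max_eq_left pi_pos.le, mul_one, div_self pi_ne_zero]
  have hsym : ∫ z in Ω, σ (w z) * (P z.1 / π) = 0 := by
    have hanti : ∀ r, Function.Antiperiodic (fun θ => σ (w (r, θ)) * (P r / π)) (π / 2) := by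
      intro r θ
      have hflip : w (r, θ + π / 2) = -w (r, θ) := by
        simp only [hw, mul_add, show 2 * (π / 2) = π by ring, cos_add_pi, sin_add_pi]
        ring
      simp only [hflip, hodd, neg_mul]
    have := setIntegral_prod_Ico_eq_zero_of_antiperiodic (μ := (volume : Measure ℝ))
      (F := fun z => σ (w z) * (P z.1 / π)) (s := Ici 0) (a := -(π / 2))
      pi_div_two_pos hanti
    rw [show -(π / 2) + 2 * (π / 2) = π / 2 by ring] at this
    exact this (hint w (by fun_prop))
  simp_rw [mul_div_assoc]
  refine abs_integral_mul_le_of_abs_sub_le (fun z => div_nonneg (hP0 _) pi_pos.le) hmass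
    (hint _ (by unfold Vact; fun_prop)) (hint w (by fun_prop)) hsym fun z => ?_
  have hlip := abs_sub_le_deriv_zero_mul hpos hmax (Vact v z.1 z.2) (w z)
  rwa [show Vact v z.1 z.2 - w z = v 0 by simp only [Vact, hw]; ring] at hlip

theorem v0_derivative_lower_bound_general
    (σ P : ℝ → ℝ) (J0 J1 : ℝ)
    (I : ℝ → ℝ × ℝ × ℝ)
    (c : ℝ) (hI0 : ∀ t : ℝ, 0 ≤ t → c ≤ (I t).1)
    (hodd : ∀ x, σ (-x) = -σ x)
    (hpos : ∀ x, 0 < deriv σ x)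
    (hbot : Tendsto σ atBot (nhds (-1)))
    (htop : Tendsto σ atTop (nhds 1))
    (hmax : ∀ x, deriv σ x ≤ deriv σ 0)
    (hP0 : ∀ r, 0 ≤ P r)
    (hPint : ∫ r in Set.Ici (0:ℝ), P r = 1)
    (v : ℝ → Fin 3 → ℝ) :
    ∀ t : ℝ, 0 ≤ t →
      (-(1 + |J0| * deriv σ 0) * |v t 0| + c ≤ fvec σ P J0 J1 (I t) (v t) 0) ∧
      (|v t 0| < c / (1 + |J0| * deriv σ 0) → 0 < fvec σ P J0 J1 (I t) (v t) 0) := by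
  intro t ht
  have hcoupling : -(|J0| * (deriv σ 0 * |v t 0|)) ≤
      J0 * ∫ x in Ω, σ (Vact (v t) x.1 x.2) * P x.1 / π := by
    refine neg_le_of_abs_le ?_
    rw [abs_mul]
    exact mul_le_mul_of_nonneg_left
      (abs_integral_sigma_Vact_le hodd hpos hmax hbot htop hP0 hPint (v t)) (abs_nonneg J0)
  have hlower : -(1 + |J0| * deriv σ 0) * |v t 0| + c ≤ fvec σ P J0 J1 (I t) (v t) 0 := by
    simp only [fvec, Matrix.cons_val_zero]
    linarith [le_abs_self (v t 0), hI0 t ht]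
  refine ⟨hlower, fun hsmall => ?_⟩
  have hrate : 0 < 1 + |J0| * deriv σ 0 := by
    have := hpos 0
    positivity
  linarith [(lt_div_iff₀ hrate).1 hsmall]

/-- if `I₀(t) ≥ c > 0`, every solution satisfies
`v̇₀(t) ≥ −(1 + |J₀| σ'(0)) |v₀(t)| + c`; in particular `v̇₀(t) > 0` whenever
`|v₀(t)| < δ* = c/(1 + |J₀| σ'(0))`.  (Recall `v̇₀(t) = f₀(v(t), I(t))`.) -/
theorem v0_derivative_lower_bound
    (σ P : ℝ → ℝ) (J0 J1 : ℝ) (hJ0 : J0 ≠ 0) (hJ1 : 0 < J1)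
    (I : ℝ → ℝ × ℝ × ℝ) (hI : Continuous I)
    (c : ℝ) (hc : 0 < c) (hI0 : ∀ t : ℝ, 0 ≤ t → c ≤ (I t).1)
    (hσ : ContDiff ℝ (⊤ : ℕ∞) σ)
    (hodd : ∀ x, σ (-x) = -σ x)
    (hpos : ∀ x, 0 < deriv σ x)
    (hcc : ∀ x, x * iteratedDeriv 2 σ x ≤ 0)
    (hσ0 : σ 0 = 0)
    (hbot : Tendsto σ atBot (nhds (-1)))
    (htop : Tendsto σ atTop (nhds 1))
    (hmax : ∀ x, deriv σ x ≤ deriv σ 0)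
    (hP0 : ∀ r, 0 ≤ P r)
    (hPsupp : HasCompactSupport P)
    (hPint : ∫ r in Set.Ici (0:ℝ), P r = 1)
    (v : ℝ → Fin 3 → ℝ) (hv : IsSol σ P J0 J1 I v) :
    ∀ t : ℝ, 0 ≤ t →
      (-(1 + |J0| * deriv σ 0) * |v t 0| + c ≤ fvec σ P J0 J1 (I t) (v t) 0) ∧
      (|v t 0| < c / (1 + |J0| * deriv σ 0) → 0 < fvec σ P J0 J1 (I t) (v t) 0) :=
  v0_derivative_lower_bound_general σ P J0 J1 I c hI0 hodd hpos hbot htop hmax hP0 hPint v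
end

section
/- Let I : [0,∞) → ℝ³ be continuous with I₀(t) ≥ c > 0 for all t ≥ 0, let v be a solution of (EqP), set δ* = c / (1 + |J₀| σ'(0)) and fix δ with 0 < δ < δ*. Then: (a) the set {t ≥ 0 : v₀(t) = 0} contains at most one element; (b) the set {t ≥ 0 : |v₀(t)| ≤ δ} is a (possibly empty) interval whose length is at most t_δ = (δ*/c) · 2δ/(δ* − δ); (c) if v₀(t*) ≥ δ for some t* ≥ 0, then v₀(t) ≥ δ for all t ≥ t*. -/
/-!
For odd `σ`, the shift `θ ↦ θ + π/2` flips the sign of `σ(V(r,θ,v) - v₀)`, so its angular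
average vanishes; as `σ` is `σ'(0)`-Lipschitz, the recurrent term of `f₀` is then at most
`|J₀| σ'(0) |v₀|`, whence `v̇₀ ≥ c - (1 + |J₀| σ'(0)) |v₀|`. Thus `v̇₀ > 0` wherever
`|v₀| < δ*`: no level in `(-δ*, δ*)` is ever crossed downwards, and while `|v₀| ≤ δ` the
component `v₀` grows at rate at least `c - (1 + |J₀| σ'(0)) δ`, which bounds the time spent there.
-/

open MeasureTheory Real Set Filter

open scoped NNReal

theorem Function.Antiperiodic.intervalIntegral_add_two_mul_eq_zero {f : ℝ → ℝ} {p : ℝ}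
    (hf : Function.Antiperiodic f p) (hfc : Continuous f) (a : ℝ) :
    ∫ x in a..a + 2 * p, f x = 0 := by
  have hsecond : ∫ x in a + p..a + 2 * p, f x = -∫ x in a..a + p, f x := by
    rw [← intervalIntegral.integral_neg, two_mul, ← add_assoc,
      ← intervalIntegral.integral_comp_add_right]
    exact intervalIntegral.integral_congr fun x _ => hf x
  rw [← intervalIntegral.integral_add_adjacent_intervals (b := a + p)
    (hfc.intervalIntegrable _ _) (hfc.intervalIntegrable _ _), hsecond, add_neg_cancel]

theorem setIntegral_Ico_comp_cos_sin_eq_zero {σ : ℝ → ℝ} (hσ : Continuous σ)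
    (hodd : ∀ x, σ (-x) = -σ x) (a b : ℝ) :
    ∫ θ in Ico (-(π / 2)) (π / 2), σ (a * cos (2 * θ) + b * sin (2 * θ)) = 0 := by
  have hanti : Function.Antiperiodic (fun θ => σ (a * cos (2 * θ) + b * sin (2 * θ))) (π / 2) := by
    intro θ
    simp only [mul_add, mul_div_cancel₀ π two_ne_zero, cos_add_pi, sin_add_pi, ← hodd]
    ring_nf
  rw [integral_Ico_eq_integral_Ioo, ← integral_Ioc_eq_integral_Ioo,
    ← intervalIntegral.integral_of_le (by linarith [pi_pos])]
  convert hanti.intervalIntegral_add_two_mul_eq_zero (by fun_prop) (-(π / 2)) using 2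
  ring

local notation "Ω" => SProd.sprod (Ici (0:ℝ)) (Ico (-(π / 2)) (π / 2))

theorem setIntegral_comp_Vact_sub_eq_zero {σ : ℝ → ℝ} (hσ : Continuous σ)
    (hodd : ∀ x, σ (-x) = -σ x) (P : ℝ → ℝ) (w : Fin 3 → ℝ) :
    ∫ x in Ω, σ (Vact w x.1 x.2 - w 0) * P x.1 / π = 0 := by
  by_cases hint : IntegrableOn (fun x : ℝ × ℝ => σ (Vact w x.1 x.2 - w 0) * P x.1 / π) Ω
  · rw [Measure.volume_eq_prod, setIntegral_prod _ hint]
    have hV : ∀ r θ, Vact w r θ - w 0 = r * w 1 * cos (2 * θ) + r * w 2 * sin (2 * θ) :=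
      fun r θ => by rw [Vact]; ring
    simp only [hV, mul_div_assoc, integral_mul_const,
      setIntegral_Ico_comp_cos_sin_eq_zero hσ hodd, zero_mul, integral_zero]
  · exact integral_undef hint

theorem setIntegral_div_pi_eq_one {P : ℝ → ℝ} (hP : ∫ r in Ici 0, P r = 1) :
    ∫ x in Ω, P x.1 / π = 1 := by
  have h := setIntegral_prod_mul (μ := volume) (ν := volume) P (fun _ => π⁻¹) (Ici 0)
    (Ico (-(π / 2)) (π / 2))
  simp only [← div_eq_mul_inv, hP, setIntegral_const, ← Measure.volume_eq_prod] at h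
  rw [h, measureReal_def, Real.volume_Ico, ENNReal.toReal_ofReal (by linarith [pi_pos])]
  simp only [smul_eq_mul]
  field_simp
  norm_num

theorem abs_setIntegral_comp_Vact_le {σ P : ℝ → ℝ} {K : ℝ≥0} (hσ : LipschitzWith K σ)
    (hodd : ∀ x, σ (-x) = -σ x) (hP0 : ∀ r, 0 ≤ P r) (hP : ∫ r in Ici 0, P r = 1)
    (w : Fin 3 → ℝ) :
    |∫ x in Ω, σ (Vact w x.1 x.2) * P x.1 / π| ≤ K * |w 0| := by
  set F : ℝ × ℝ → ℝ := fun x => σ (Vact w x.1 x.2) - σ (Vact w x.1 x.2 - w 0)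
  have hF : ∀ x, ‖F x‖ ≤ K * |w 0| := fun x => by
    simpa [Real.dist_eq] using hσ.dist_le_mul (Vact w x.1 x.2) (Vact w x.1 x.2 - w 0)
  have hmass := setIntegral_div_pi_eq_one hP
  have hQ : IntegrableOn (fun x : ℝ × ℝ => P x.1 / π) Ω :=
    Integrable.of_integral_ne_zero (by rw [hmass]; exact one_ne_zero)
  have hFQ : IntegrableOn (fun x => F x * (P x.1 / π)) Ω := by
    have hσc := hσ.continuous
    exact hQ.bdd_mul (Continuous.aestronglyMeasurable (by simp only [F, Vact]; fun_prop))
      (ae_of_all _ hF)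
  have hsplit : ∀ x : ℝ × ℝ, σ (Vact w x.1 x.2) * P x.1 / π
      = F x * (P x.1 / π) + σ (Vact w x.1 x.2 - w 0) * P x.1 / π := fun x => by ring
  by_cases hint : IntegrableOn (fun x : ℝ × ℝ => σ (Vact w x.1 x.2 - w 0) * P x.1 / π) Ω
  · simp only [hsplit, integral_add hFQ hint, setIntegral_comp_Vact_sub_eq_zero hσ.continuous hodd,
      add_zero, ← Real.norm_eq_abs]
    calc ‖∫ x in Ω, F x * (P x.1 / π)‖ ≤ ∫ x in Ω, K * |w 0| * (P x.1 / π) :=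
          norm_integral_le_of_norm_le (hQ.const_mul _) (ae_of_all _ fun x => by
            have hq : 0 ≤ P x.1 / π := div_nonneg (hP0 x.1) pi_pos.le
            rw [norm_mul, Real.norm_of_nonneg hq]
            exact mul_le_mul_of_nonneg_right (hF x) hq)
      _ = K * |w 0| := by rw [integral_const_mul, hmass, mul_one]
  · have hnot : ¬IntegrableOn (fun x : ℝ × ℝ => σ (Vact w x.1 x.2) * P x.1 / π) Ω := fun h =>
      hint (by simpa only [hsplit, Pi.sub_def, add_sub_cancel_left] using h.sub hFQ)
    rw [integral_undef hnot, abs_zero]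
    positivity

theorem sub_mul_abs_le_fvec_zero {σ P : ℝ → ℝ} {K : ℝ≥0} (hσ : LipschitzWith K σ)
    (hodd : ∀ x, σ (-x) = -σ x) (hP0 : ∀ r, 0 ≤ P r) (hP : ∫ r in Ici 0, P r = 1)
    (J0 J1 : ℝ) {It : ℝ × ℝ × ℝ} {c : ℝ} (hc : c ≤ It.1) (w : Fin 3 → ℝ) :
    c - (1 + |J0| * K) * |w 0| ≤ fvec σ P J0 J1 It w 0 := by
  have hA := mul_le_mul_of_nonneg_left (abs_setIntegral_comp_Vact_le hσ hodd hP0 hP w)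
    (abs_nonneg J0)
  have hJA := neg_abs_le (J0 * ∫ x in Ω, σ (Vact w x.1 x.2) * P x.1 / π)
  rw [abs_mul] at hJA
  simp only [fvec, Matrix.cons_val_zero]
  linarith [le_abs_self (w 0)]

section ScalarComparison

variable {u φ : ℝ → ℝ} {c M δ : ℝ} (hu : ∀ t ∈ Ici (0:ℝ), HasDerivWithinAt u (φ t) (Ici 0) t)
  (hφ : ∀ t, 0 ≤ t → c - M * |u t| ≤ φ t) (hM : 0 < M)

include hu in
theorem le_of_le_of_deriv_pos_on_level {d a t : ℝ} (hlevel : ∀ s, 0 ≤ s → u s = d → 0 < φ s)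
    (ha : 0 ≤ a) (hda : d ≤ u a) (hat : a ≤ t) : d ≤ u t := by
  have hcont : ContinuousOn u (Icc a t) := fun s hs =>
    (hu s (ha.trans hs.1)).continuousWithinAt.mono fun x hx => ha.trans hx.1
  have hderiv : ∀ s ∈ Ico a t, HasDerivWithinAt (fun x => -u x) (-φ s) (Ici s) s := fun s hs =>
    ((hu s (ha.trans hs.1)).mono (Ici_subset_Ici.2 (ha.trans hs.1))).neg
  have h := image_le_of_deriv_right_lt_deriv_boundary' (B := fun _ => -d) (B' := fun _ => 0)
    hcont.neg hderiv (neg_le_neg hda) continuousOn_const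
    (fun _ _ => hasDerivWithinAt_const _ _ _)
    (fun s hs hsd => neg_neg_of_pos (hlevel s (ha.trans hs.1) (neg_injective hsd)))
    ⟨hat, le_rfl⟩
  exact neg_le_neg_iff.1 h

include hφ hM in
theorem deriv_pos_of_abs_lt {t : ℝ} (ht : 0 ≤ t) (hut : |u t| < c / M) : 0 < φ t := by
  have := (lt_div_iff₀' hM).1 hut
  linarith [hφ t ht]

include hu hφ hM

theorem le_of_le_of_abs_lt {d a t : ℝ} (hd : |d| < c / M) (ha : 0 ≤ a)
    (hda : d ≤ u a) (hat : a ≤ t) : d ≤ u t :=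
  le_of_le_of_deriv_pos_on_level hu
    (fun _ hs hsd => deriv_pos_of_abs_lt hφ hM hs (hsd ▸ hd)) ha hda hat

theorem lt_of_lt_of_abs_lt {e a t : ℝ} (he : |e| < c / M) (ha : 0 ≤ a)
    (hea : e < u a) (hat : a ≤ t) : e < u t := by
  set d := min (u a) ((e + c / M) / 2)
  have hed : e < d := lt_min hea (by linarith [(abs_lt.1 he).2])
  have hd : |d| < c / M := abs_lt.2
    ⟨by linarith [(abs_lt.1 he).1], (min_le_right _ _).trans_lt (by linarith [(abs_lt.1 he).2])⟩
  exact hed.trans_le (le_of_le_of_abs_lt hu hφ hM hd ha (min_le_left _ _) hat)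

theorem ordConnected_abs_le (hδ : δ < c / M) : OrdConnected {t | 0 ≤ t ∧ |u t| ≤ δ} := by
  refine ⟨fun s hs t ht r hr => ⟨hs.1.trans hr.1, abs_le.2 ⟨?_, ?_⟩⟩⟩
  · have hδabs : |-δ| < c / M := by rwa [abs_neg, abs_of_nonneg ((abs_nonneg _).trans hs.2)]
    exact le_of_le_of_abs_lt hu hφ hM hδabs hs.1 (abs_le.1 hs.2).1 hr.1
  · by_contra! hr'
    have hδabs : |δ| < c / M := by rwa [abs_of_nonneg ((abs_nonneg _).trans hs.2)]
    exact (lt_of_lt_of_abs_lt hu hφ hM hδabs (hs.1.trans hr.1) hr' hr.2).not_ge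
      (abs_le.1 ht.2).2

theorem mul_sub_le_sub_of_abs_le (hδ : δ < c / M) {s t : ℝ}
    (hs : s ∈ {t | 0 ≤ t ∧ |u t| ≤ δ}) (ht : t ∈ {t | 0 ≤ t ∧ |u t| ≤ δ}) (hst : s ≤ t) :
    (c - M * δ) * (t - s) ≤ u t - u s := by
  have hsub := (ordConnected_abs_le hu hφ hM hδ).out hs ht
  have hcont : ContinuousOn u (Icc s t) := fun x hx =>
    (hu x (hsub hx).1).continuousWithinAt.mono fun y hy => (hsub hy).1
  have h := image_le_of_deriv_right_le_deriv_boundary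
    (f := fun x => u s + (c - M * δ) * (x - s)) (f' := fun _ => c - M * δ) (by fun_prop)
    (fun x _ => ((hasDerivWithinAt_id x _).sub_const s).const_mul (c - M * δ)
      |>.const_add (u s) |>.congr_deriv (mul_one _))
    (by simp) hcont
    (fun x hx => ((hu x (hsub (Ico_subset_Icc_self hx)).1).mono
      (Ici_subset_Ici.2 (hsub (Ico_subset_Icc_self hx)).1)))
    (fun x hx => by
      have hx' := hsub (Ico_subset_Icc_self hx)
      linarith [hφ x hx'.1, mul_le_mul_of_nonneg_left hx'.2 hM.le])
    ⟨hst, le_rfl⟩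
  linarith

theorem strictMonoOn_abs_le (hδ : δ < c / M) :
    StrictMonoOn u {t | 0 ≤ t ∧ |u t| ≤ δ} := fun s hs t ht hst => by
  have hρ : 0 < c - M * δ := by linarith [(lt_div_iff₀' hM).1 hδ]
  linarith [mul_sub_le_sub_of_abs_le hu hφ hM hδ hs ht hst.le, mul_pos hρ (sub_pos.2 hst)]

theorem sub_le_of_abs_le (hδ : δ < c / M) {s t : ℝ}
    (hs : s ∈ {t | 0 ≤ t ∧ |u t| ≤ δ}) (ht : t ∈ {t | 0 ≤ t ∧ |u t| ≤ δ}) :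
    t - s ≤ 2 * δ / (c - M * δ) := by
  have hρ : 0 < c - M * δ := by linarith [(lt_div_iff₀' hM).1 hδ]
  have hδ0 : 0 ≤ δ := (abs_nonneg _).trans hs.2
  rcases le_total s t with hst | hts
  · rw [le_div_iff₀ hρ]
    linarith [mul_sub_le_sub_of_abs_le hu hφ hM hδ hs ht hst, (abs_le.1 hs.2).1,
      (abs_le.1 ht.2).2]
  · exact (sub_nonpos.2 hts).trans (by positivity)

end ScalarComparison

theorem passage_through_singularity_general
    (σ P : ℝ → ℝ) (J0 J1 : ℝ)
    (I : ℝ → ℝ × ℝ × ℝ)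
    (c : ℝ) (hc : 0 < c) (hI0 : ∀ t : ℝ, 0 ≤ t → c ≤ (I t).1)
    (hσ : ContDiff ℝ (⊤ : ℕ∞) σ)
    (hodd : ∀ x, σ (-x) = -σ x)
    (hpos : ∀ x, 0 < deriv σ x)
    (hmax : ∀ x, deriv σ x ≤ deriv σ 0)
    (hP0 : ∀ r, 0 ≤ P r)
    (hPint : ∫ r in Set.Ici (0:ℝ), P r = 1)
    (v : ℝ → Fin 3 → ℝ) (hv : IsSol σ P J0 J1 I v)
    (δ : ℝ) (hδ : 0 < δ) (hδlt : δ < c / (1 + |J0| * deriv σ 0)) :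
    ({t : ℝ | 0 ≤ t ∧ v t 0 = 0}).Subsingleton ∧
    (Set.OrdConnected {t : ℝ | 0 ≤ t ∧ |v t 0| ≤ δ} ∧
      ∀ s ∈ {t : ℝ | 0 ≤ t ∧ |v t 0| ≤ δ}, ∀ u ∈ {t : ℝ | 0 ≤ t ∧ |v t 0| ≤ δ},
        u - s ≤ (c / (1 + |J0| * deriv σ 0)) / c *
          (2 * δ / (c / (1 + |J0| * deriv σ 0) - δ))) ∧
    (∀ tstar : ℝ, 0 ≤ tstar → δ ≤ v tstar 0 → ∀ t : ℝ, tstar ≤ t → δ ≤ v t 0) := by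
  set M := 1 + |J0| * deriv σ 0
  have hM : 0 < M := add_pos_of_pos_of_nonneg one_pos (mul_nonneg (abs_nonneg _) (hpos 0).le)
  have hlip : LipschitzWith ⟨deriv σ 0, (hpos 0).le⟩ σ :=
    lipschitzWith_of_nnnorm_deriv_le (hσ.differentiable (by simp)) fun x =>
      show ‖deriv σ x‖ ≤ deriv σ 0 from (Real.norm_of_nonneg (hpos x).le).trans_le (hmax x)
  have hu : ∀ t ∈ Ici (0:ℝ), HasDerivWithinAt (fun t => v t 0)
      (fvec σ P J0 J1 (I t) (v t) 0) (Ici 0) t := fun t ht => hasDerivWithinAt_pi.1 (hv.2 t ht) 0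
  have hφ : ∀ t, 0 ≤ t → c - M * |v t 0| ≤ fvec σ P J0 J1 (I t) (v t) 0 := fun t ht =>
    sub_mul_abs_le_fvec_zero hlip hodd hP0 hPint J0 J1 (hI0 t ht) (v t)
  have hδ' : |δ| < c / M := by rwa [abs_of_pos hδ]
  refine ⟨fun s hs t ht => ?_, ⟨ordConnected_abs_le hu hφ hM hδlt, fun s hs t ht => ?_⟩,
    fun tstar h0 hstar t ht => le_of_le_of_abs_lt hu hφ hM hδ' h0 hstar ht⟩
  · have hzero : ∀ {t}, t ∈ {t : ℝ | 0 ≤ t ∧ v t 0 = 0} → t ∈ {t : ℝ | 0 ≤ t ∧ |v t 0| ≤ δ} :=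
      fun ht => ⟨ht.1, by rw [ht.2, abs_zero]; exact hδ.le⟩
    exact (strictMonoOn_abs_le hu hφ hM hδlt).injOn (hzero hs) (hzero ht) (hs.2.trans ht.2.symm)
  · have hc' : c / M / c * (2 * δ / (c / M - δ)) = 2 * δ / (c - M * δ) := by
      field_simp
    exact hc' ▸ sub_le_of_abs_le hu hφ hM hδlt hs ht

/-- with `I₀(t) ≥ c > 0`, `δ* = c/(1+|J₀|σ'(0))` and `0 < δ < δ*`:
(a) `v₀` vanishes at most once on `[0,∞)`; (b) `{t ≥ 0 : |v₀(t)| ≤ δ}` is an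
interval of length at most `t_δ = (δ*/c)·2δ/(δ*−δ)`; (c) if `v₀(t*) ≥ δ` then
`v₀(t) ≥ δ` for all `t ≥ t*`. -/
theorem passage_through_singularity
    (σ P : ℝ → ℝ) (J0 J1 : ℝ) (hJ0 : J0 ≠ 0) (hJ1 : 0 < J1)
    (I : ℝ → ℝ × ℝ × ℝ) (hI : Continuous I)
    (c : ℝ) (hc : 0 < c) (hI0 : ∀ t : ℝ, 0 ≤ t → c ≤ (I t).1)
    (hσ : ContDiff ℝ (⊤ : ℕ∞) σ)
    (hodd : ∀ x, σ (-x) = -σ x)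
    (hpos : ∀ x, 0 < deriv σ x)
    (hcc : ∀ x, x * iteratedDeriv 2 σ x ≤ 0)
    (hσ0 : σ 0 = 0)
    (hbot : Tendsto σ atBot (nhds (-1)))
    (htop : Tendsto σ atTop (nhds 1))
    (hmax : ∀ x, deriv σ x ≤ deriv σ 0)
    (hP0 : ∀ r, 0 ≤ P r)
    (hPsupp : HasCompactSupport P)
    (hPint : ∫ r in Set.Ici (0:ℝ), P r = 1)
    (v : ℝ → Fin 3 → ℝ) (hv : IsSol σ P J0 J1 I v)
    (δ : ℝ) (hδ : 0 < δ) (hδlt : δ < c / (1 + |J0| * deriv σ 0)) :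
    ({t : ℝ | 0 ≤ t ∧ v t 0 = 0}).Subsingleton ∧
    (Set.OrdConnected {t : ℝ | 0 ≤ t ∧ |v t 0| ≤ δ} ∧
      ∀ s ∈ {t : ℝ | 0 ≤ t ∧ |v t 0| ≤ δ}, ∀ u ∈ {t : ℝ | 0 ≤ t ∧ |v t 0| ≤ δ},
        u - s ≤ (c / (1 + |J0| * deriv σ 0)) / c *
          (2 * δ / (c / (1 + |J0| * deriv σ 0) - δ))) ∧
    (∀ tstar : ℝ, 0 ≤ tstar → δ ≤ v tstar 0 → ∀ t : ℝ, tstar ≤ t → δ ≤ v t 0) :=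
  passage_through_singularity_general σ P J0 J1 I c hc hI0 hσ hodd hpos hmax hP0 hPint v hv δ hδ
    hδlt
end
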